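/- Let n ≥ 2, d_∞ ∈ ℝ and v_∞ ≥ 0, and set ρ(v_∞) = √(((n−2)/2)² + v_∞) − (n−2)/2, p₃ = (n+ρ(v_∞))/(n+ρ(v_∞)−1), γ(p,m) = 2 + (m+1)p − (m−1)p², γ₂(p) = 2(n+ρ(v_∞)−1)(p−p₃) + γ(p, n+d_∞), and let p₅ be the positive root of γ₂(p) = 0 when n+d_∞ > 1 (explicitly p₅ = (3n+d_∞+2ρ(v_∞)−1+√((3n+d_∞+2ρ(v_∞)−1)²−8(n+d_∞−1)(n+ρ(v_∞)−1)))/(2(n+d_∞−1))) and p₅ = ∞ when n+d_∞ ≤ 1. Let p_S(m) be the positive root of γ(p,m) = 0 for m > 1 and ∞ for m ≤ 1, and p_G(m) = 1 + 2/(m−1) for m > 1 and ∞ for m ≤ 1. Then min(p₃, p₅) < max(p_S(n+d_∞), p_G(n+ρ(v_∞))). -/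

import Mathlib

open MeasureTheory Set Real Filter

noncomputable section

/-- `ρ(v) = √(((n−2)/2)² + v) − (n−2)/2`. -/
noncomputable def rho (n : ℕ) (v : ℝ) : ℝ :=
  Real.sqrt ((((n : ℝ) - 2) / 2) ^ 2 + v) - ((n : ℝ) - 2) / 2

/-- The quadratic `γ(p,m) = 2 + (m+1)p - (m-1)p²`. -/
def gam (p m : ℝ) : ℝ := 2 + (m + 1) * p - (m - 1) * p ^ 2

/-- The Strauss exponent `p_S(m)`, valued in the extended reals (`∞` for `m ≤ 1`). -/
noncomputable def pS (m : ℝ) : EReal :=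
  if 1 < m then (((m + 1 + Real.sqrt (m ^ 2 + 10 * m - 7)) / (2 * (m - 1)) : ℝ) : EReal) else ⊤

/-- The Glassey-type exponent `p_G(m)`, valued in the extended reals (`∞` for `m ≤ 1`). -/
noncomputable def pG (m : ℝ) : EReal :=
  if 1 < m then ((1 + 2 / (m - 1) : ℝ) : EReal) else ⊤

theorem div_sub_one_lt_pG (m : ℝ) : ((m / (m - 1) : ℝ) : EReal) < pG m := by
  unfold pG
  split_ifs with hm
  · have hpos : 0 < m - 1 := sub_pos.2 hm
    have hlt : m / (m - 1) < 1 + 2 / (m - 1) := by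
      rw [one_add_div hpos.ne']
      exact div_lt_div_of_pos_right (by linarith) hpos
    exact_mod_cast hlt
  · exact EReal.coe_lt_top _

theorem min_p3_p5_lt_pc_general
    (n : ℕ) (d_inf v_inf : ℝ)
    (p3 : ℝ) (p5 : EReal)
    (hp3 : p3 = ((n : ℝ) + rho n v_inf) / ((n : ℝ) + rho n v_inf - 1)) :
    min ((p3 : ℝ) : EReal) p5 < max (pS ((n : ℝ) + d_inf)) (pG ((n : ℝ) + rho n v_inf)) := by
  subst hp3
  calc min _ p5 ≤ _ := min_le_left _ _
    _ < pG _ := div_sub_one_lt_pG _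
    _ ≤ _ := le_max_right _ _

/-- One always has `min(p₃, p₅) < p_c = max(p_S(n+d_∞), p_G(n+ρ(v_∞)))`. -/
theorem min_p3_p5_lt_pc
    (n : ℕ) (hn : 2 ≤ n) (d_inf v_inf : ℝ) (hv : 0 ≤ v_inf)
    (p3 : ℝ) (p5 : EReal)
    (hp3 : p3 = ((n : ℝ) + rho n v_inf) / ((n : ℝ) + rho n v_inf - 1))
    (hp5 : p5 = if 1 < (n : ℝ) + d_inf then
      (((3 * (n : ℝ) + d_inf + 2 * rho n v_inf - 1 +
        Real.sqrt ((3 * (n : ℝ) + d_inf + 2 * rho n v_inf - 1) ^ 2 -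
          8 * ((n : ℝ) + d_inf - 1) * ((n : ℝ) + rho n v_inf - 1))) /
        (2 * ((n : ℝ) + d_inf - 1)) : ℝ) : EReal) else ⊤) :
    min ((p3 : ℝ) : EReal) p5 < max (pS ((n : ℝ) + d_inf)) (pG ((n : ℝ) + rho n v_inf)) :=
  min_p3_p5_lt_pc_general n d_inf v_inf p3 p5 hp3
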